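/- Separation by a unit sphere: If S is a closed, spindle-convex proper subset of ℝ³ and z ∈ ℝ³ \ S, then there exists a closed unit ball B ⊆ ℝ³ with S ⊆ B and z ∉ B. -/

import Mathlib

/-!
A closed spindle-convex set is convex, since a segment is the limit of the short arcs of radius
`r → ∞` over it. Hence the point `p ∈ S` nearest to `z` comes with the unit outer normal
`e = (z - p) / ‖z - p‖`: all of `S` lies in the half-space `⟪x - p, e⟫ ≤ 0`. The unit ball
`B(p - e, 1)`, tangent to this half-space at `p`, contains `S`: for `q ∈ S` outside it, the
short arc of radius `max 1 (‖q - p‖ / 2)` over `[p, q]` in the plane of `q - p` and `e` reaches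
beyond the supporting plane at its highest point. If `q - p` is parallel to `e`, this is applied
to the top of a half circle over `[p, q]` instead. Finally `z` is at distance `‖z - p‖ + 1`
from `p - e`.
-/

open scoped InnerProductSpace
open Metric

noncomputable section

abbrev E3 : Type := EuclideanSpace ℝ (Fin 3)

/-- `S` is spindle-convex: for any two distinct points `a b ∈ S` and any circle of
radius `r ≥ 1` (center `c`, lying in the plane through `c` with normal `n`) passing
through `a` and `b`, every point of the (closed) short circular arc with endpoints
`a, b` belongs to `S`.  The short arc is cut off by a hyperplane through the chord
`[a,b]` with in-plane direction `u` pointing towards the short side (`0 ≤ ⟪a-c,u⟫`). -/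
def SpindleConvex (S : Set E3) : Prop :=
  ∀ a ∈ S, ∀ b ∈ S, a ≠ b →
    ∀ (c n u : E3) (r : ℝ), 1 ≤ r →
      ‖a - c‖ = r → ‖b - c‖ = r →
      n ≠ 0 → ⟪a - c, n⟫_ℝ = 0 → ⟪b - c, n⟫_ℝ = 0 →
      u ≠ 0 → ⟪u, n⟫_ℝ = 0 → ⟪a - c, u⟫_ℝ = ⟪b - c, u⟫_ℝ → 0 ≤ ⟪a - c, u⟫_ℝ →
      ∀ p : E3, ‖p - c‖ = r → ⟪p - c, n⟫_ℝ = 0 → ⟪a - c, u⟫_ℝ ≤ ⟪p - c, u⟫_ℝ → p ∈ S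

open Filter Topology Module

section General

variable {E : Type*} [NormedAddCommGroup E] [InnerProductSpace ℝ E]

theorem exists_norm_eq_one_inner_eq_zero [FiniteDimensional ℝ E] (hE : 2 < finrank ℝ E)
    (v w : E) : ∃ n : E, ‖n‖ = 1 ∧ ⟪v, n⟫_ℝ = 0 ∧ ⟪w, n⟫_ℝ = 0 := by
  let φ : E →ₗ[ℝ] ℝ × ℝ := (innerₛₗ ℝ v).prod (innerₛₗ ℝ w)
  obtain ⟨n, hn, hn0⟩ := Submodule.exists_mem_ne_zero_of_ne_bot
    (φ.ker_ne_bot_of_finrank_lt (by simpa using hE))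
  have hv : ⟪v, n⟫_ℝ = 0 := congrArg Prod.fst hn
  have hw : ⟪w, n⟫_ℝ = 0 := congrArg Prod.snd hn
  refine ⟨‖n‖⁻¹ • n, norm_smul_inv_norm hn0, ?_, ?_⟩ <;> simp [real_inner_smul_right, hv, hw]

theorem norm_smul_add_smul_sq {w u : E} (h : ⟪w, u⟫_ℝ = 0) (a b : ℝ) :
    ‖a • w + b • u‖ ^ 2 = a ^ 2 * ‖w‖ ^ 2 + b ^ 2 * ‖u‖ ^ 2 := by
  have h' : ⟪a • w, b • u⟫_ℝ = 0 := by simp [real_inner_smul_left, real_inner_smul_right, h]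
  rw [sq, norm_add_sq_eq_norm_sq_add_norm_sq_real h', norm_smul, norm_smul, Real.norm_eq_abs,
    Real.norm_eq_abs]
  nlinarith [sq_abs a, sq_abs b]

theorem exists_eq_smul_add_smul_of_sq_inner_lt {w e : E}
    (h : ⟪w, e⟫_ℝ ^ 2 < ‖w‖ ^ 2 * ‖e‖ ^ 2) :
    ∃ u : E, ∃ k : ℝ, ‖u‖ = 1 ∧ ⟪w, u⟫_ℝ = 0 ∧ 0 < k ∧
      e = (⟪w, e⟫_ℝ / ‖w‖ ^ 2) • w + k • u := by
  have hw : ‖w‖ ≠ 0 := by rintro h0; simp [norm_eq_zero.1 h0] at h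
  set c := ⟪w, e⟫_ℝ / ‖w‖ ^ 2
  set e' := e - c • w with he'_def
  have hwe' : ⟪w, e'⟫_ℝ = 0 := by
    simp only [e', c, inner_sub_right, real_inner_smul_right, real_inner_self_eq_norm_sq]
    field_simp; ring
  have he' : e' ≠ 0 := by
    intro h0
    have he : e = c • w := sub_eq_zero.1 h0
    have h1 : ⟪w, e⟫_ℝ = c * ‖w‖ ^ 2 := by
      rw [he, real_inner_smul_right, real_inner_self_eq_norm_sq]
    have h2 : ‖e‖ = |c| * ‖w‖ := by rw [he, norm_smul, Real.norm_eq_abs]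
    have h3 : (c * ‖w‖ ^ 2) ^ 2 = ‖w‖ ^ 2 * (|c| * ‖w‖) ^ 2 := by simp only [mul_pow, sq_abs]; ring
    rw [h1, h2, h3] at h
    exact lt_irrefl _ h
  refine ⟨‖e'‖⁻¹ • e', ‖e'‖, norm_smul_inv_norm he', ?_, norm_pos_iff.2 he', ?_⟩
  · rw [real_inner_smul_right, hwe', mul_zero]
  · rw [smul_inv_smul₀ (norm_ne_zero_iff.2 he'), he'_def, add_sub_cancel]

theorem mem_closedBall_sub_smul_iff {p q e : E} (he : ‖e‖ = 1) {r : ℝ} (hr : 0 ≤ r) :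
    q ∈ closedBall (p - r • e) r ↔ ‖q - p‖ ^ 2 + 2 * r * ⟪q - p, e⟫_ℝ ≤ 0 := by
  have hsq : ‖q - (p - r • e)‖ ^ 2 = ‖q - p‖ ^ 2 + 2 * r * ⟪q - p, e⟫_ℝ + r ^ 2 := by
    rw [show q - (p - r • e) = q - p + r • e by abel, norm_add_sq_real, real_inner_smul_right,
      norm_smul, he, Real.norm_eq_abs, abs_of_nonneg hr]
    ring
  rw [mem_closedBall, dist_eq_norm, ← sq_le_sq₀ (norm_nonneg _) hr, hsq]
  constructor <;> intro h <;> linarith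

end General

theorem sub_sqrt_sq_sub_le {r A : ℝ} (hr : 0 < r) (hA : 0 ≤ A) (hAr : A ≤ r ^ 2) :
    r - √(r ^ 2 - A) ≤ A / r := by
  have hs := Real.sq_sqrt (sub_nonneg.2 hAr)
  have hsr : √(r ^ 2 - A) ≤ r := (Real.sqrt_le_left hr.le).2 (by linarith)
  rw [le_div_iff₀ hr]; nlinarith [Real.sqrt_nonneg (r ^ 2 - A)]

theorem tendsto_sqrt_sq_sub_sub_atTop {A : ℝ} (hA : 0 ≤ A) :
    Tendsto (fun r : ℝ => √(r ^ 2 - A) - r) atTop (𝓝 0) := by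
  have hlow : Tendsto (fun r : ℝ => -(A / r)) atTop (𝓝 0) := by
    simpa using ((tendsto_const_nhds (x := A)).div_atTop tendsto_id).neg
  refine tendsto_of_tendsto_of_tendsto_of_le_of_le' hlow tendsto_const_nhds ?_ ?_ <;>
    filter_upwards [eventually_ge_atTop (√A + 1)] with r hr
  · have hAr : A ≤ r ^ 2 := by nlinarith [Real.sq_sqrt hA, Real.sqrt_nonneg A]
    linarith [sub_sqrt_sq_sub_le (by linarith [Real.sqrt_nonneg A]) hA hAr]
  · have := (Real.sqrt_le_left (x := r ^ 2 - A) (by linarith [Real.sqrt_nonneg A])).2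
      (by linarith)
    linarith

namespace SpindleConvex

variable {S : Set E3}

-- `hαδ` says that `p + α • (q - p) + δ • u` lies on the circle of radius `r` through `p` and `q`
-- centred at `p + (q - p) / 2 - t • u`; its short arc is the part with `δ ≥ 0`.
theorem add_smul_add_smul_mem (hS : SpindleConvex S) {p q : E3} (hp : p ∈ S) (hq : q ∈ S)
    (hpq : p ≠ q) {u : E3} (hu : ‖u‖ = 1) (hwu : ⟪q - p, u⟫_ℝ = 0) {r t α δ : ℝ}
    (hr : 1 ≤ r) (ht : 0 ≤ t) (hrt : ‖q - p‖ ^ 2 / 4 + t ^ 2 = r ^ 2)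
    (hαδ : (α - 1 / 2) ^ 2 * ‖q - p‖ ^ 2 + (δ + t) ^ 2 = r ^ 2) (hδ : 0 ≤ δ) :
    p + α • (q - p) + δ • u ∈ S := by
  obtain ⟨n, hn, hwn, hun⟩ := exists_norm_eq_one_inner_eq_zero (by simp) (q - p) u
  have hn0 : n ≠ 0 := by rintro rfl; simp at hn
  have hu0 : u ≠ 0 := by rintro rfl; simp at hu
  set c := p + (1 / 2 : ℝ) • (q - p) - t • u
  have hsub : ∀ a b : ℝ, p + a • (q - p) + b • u - c = (a - 1 / 2) • (q - p) + (b + t) • u := by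
    intro a b; simp only [c]; module
  have hnorm : ∀ a b : ℝ, (a - 1 / 2) ^ 2 * ‖q - p‖ ^ 2 + (b + t) ^ 2 = r ^ 2 →
      ‖p + a • (q - p) + b • u - c‖ = r := by
    intro a b h
    rw [← sq_eq_sq₀ (norm_nonneg _) (by linarith), hsub, norm_smul_add_smul_sq hwu, hu,
      one_pow, mul_one, h]
  have hn_inner : ∀ a b : ℝ, ⟪p + a • (q - p) + b • u - c, n⟫_ℝ = 0 := by
    intro a b
    simp only [hsub, inner_add_left, real_inner_smul_left, hwn, hun, mul_zero, add_zero]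
  have hu_inner : ∀ a b : ℝ, ⟪p + a • (q - p) + b • u - c, u⟫_ℝ = b + t := by
    intro a b
    simp only [hsub, inner_add_left, real_inner_smul_left, hwu, real_inner_self_eq_norm_sq, hu]
    ring
  have hpu : ⟪p - c, u⟫_ℝ = t := by simpa using hu_inner 0 0
  have hqu : ⟪q - c, u⟫_ℝ = t := by simpa using hu_inner 1 0
  refine hS p hp q hq hpq c n u r hr (by simpa using hnorm 0 0 (by linarith))
    (by simpa using hnorm 1 0 (by linarith)) hn0 (by simpa using hn_inner 0 0)
    (by simpa using hn_inner 1 0) hu0 hun (hpu.trans hqu.symm) (hpu ▸ ht) _ (hnorm α δ hαδ)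
    (hn_inner α δ) ?_
  rw [hpu, hu_inner]; linarith

theorem convex (hS : SpindleConvex S) (hcl : IsClosed S) : Convex ℝ S := by
  refine convex_iff_segment_subset.2 fun a ha b hb => ?_
  rw [segment_eq_image']
  rintro _ ⟨s, ⟨hs0, hs1⟩, rfl⟩
  rcases eq_or_ne a b with rfl | hab
  · simpa using ha
  obtain ⟨u, hu, hwu, -⟩ := exists_norm_eq_one_inner_eq_zero (by simp) (b - a) (b - a)
  set m := ‖b - a‖
  have hs : (s - 1 / 2) ^ 2 * m ^ 2 ≤ m ^ 2 / 4 := by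
    have : (s - 1 / 2) ^ 2 ≤ 1 / 4 := by nlinarith
    nlinarith [mul_le_mul_of_nonneg_right this (sq_nonneg m)]
  let t (r : ℝ) := √(r ^ 2 - m ^ 2 / 4)
  let δ (r : ℝ) := √(r ^ 2 - (s - 1 / 2) ^ 2 * m ^ 2) - t r
  have hδ : Tendsto δ atTop (𝓝 0) := by
    simpa using (tendsto_sqrt_sq_sub_sub_atTop (by positivity)).sub
      (tendsto_sqrt_sq_sub_sub_atTop (A := m ^ 2 / 4) (by positivity))
  have hlim : Tendsto (fun r => a + s • (b - a) + δ r • u) atTop (𝓝 (a + s • (b - a))) := by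
    simpa using tendsto_const_nhds.add (hδ.smul_const u)
  refine hcl.mem_of_tendsto hlim ?_
  filter_upwards [eventually_ge_atTop (max 1 m)] with r hr
  have hmr : m ^ 2 / 4 ≤ r ^ 2 := by
    nlinarith [le_of_max_le_right hr, norm_nonneg (b - a)]
  refine hS.add_smul_add_smul_mem ha hb hab hu hwu (t := t r) (le_of_max_le_left hr)
    (Real.sqrt_nonneg _) ?_ ?_ (sub_nonneg.2 (Real.sqrt_le_sqrt (by linarith)))
  · rw [Real.sq_sqrt (by linarith)]; ring
  · rw [sub_add_cancel, Real.sq_sqrt (by linarith)]; ring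

theorem mem_closedBall_sub_smul_of_inner_sq_lt (hS : SpindleConvex S) {p q e : E3} (hp : p ∈ S)
    (hq : q ∈ S) (he : ‖e‖ = 1) (hsupp : ∀ x ∈ S, ⟪x - p, e⟫_ℝ ≤ 0)
    (hpar : ⟪q - p, e⟫_ℝ ^ 2 < ‖q - p‖ ^ 2) {r : ℝ} (hr : 1 ≤ r) (hqr : ‖q - p‖ ≤ 2 * r) :
    q ∈ closedBall (p - r • e) r := by
  rw [mem_closedBall_sub_smul_iff he (by linarith)]
  by_contra! hout
  set w := q - p
  set m := ‖w‖
  have hm : 0 < m := by nlinarith [norm_nonneg w, sq_nonneg ⟪w, e⟫_ℝ]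
  have hpq : p ≠ q := fun h => by simp [m, w, h] at hm
  obtain ⟨u, k, hu, hwu, hk, he_eq⟩ :=
    exists_eq_smul_add_smul_of_sq_inner_lt (w := w) (e := e) (by rwa [he, one_pow, mul_one])
  set c := ⟪w, e⟫_ℝ / m ^ 2
  have hwe : ⟪w, e⟫_ℝ = c * m ^ 2 := by simp only [c]; field_simp
  have hc : c ≤ 0 := div_nonpos_of_nonpos_of_nonneg (hsupp q hq) (sq_nonneg m)
  have hck : c ^ 2 * m ^ 2 + k ^ 2 = 1 := by
    have := norm_smul_add_smul_sq hwu c k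
    rwa [← he_eq, he, hu, one_pow, mul_one, eq_comm] at this
  have hue : ⟪u, e⟫_ℝ = k := by
    rw [he_eq, inner_add_right, real_inner_smul_right, real_inner_smul_right, real_inner_comm,
      hwu, real_inner_self_eq_norm_sq, hu]
    ring
  have hcr : 0 < 1 + 2 * r * c := by
    rw [hwe] at hout; nlinarith
  obtain ⟨t, ht, hrt⟩ : ∃ t : ℝ, 0 ≤ t ∧ m ^ 2 / 4 + t ^ 2 = r ^ 2 :=
    ⟨√(r ^ 2 - m ^ 2 / 4), Real.sqrt_nonneg _, by rw [Real.sq_sqrt (by nlinarith)]; ring⟩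
  -- the point of the circle farthest in direction `e` lies on the short arc over `[p, q]`,
  have hshort : t ≤ r * k := by
    refine le_of_sq_le_sq ?_ (by positivity)
    nlinarith [mul_nonneg (mul_nonneg (by linarith : (0:ℝ) ≤ r) (neg_nonneg.2 hc)) (sq_nonneg m)]
  -- and strictly beyond the supporting plane at `p`
  have hbeyond : t * k < r + c * m ^ 2 / 2 := by
    have hcm : -1 < c * m := by nlinarith
    refine lt_of_pow_lt_pow_left₀ 2 (by nlinarith) ?_
    have : (r + c * m ^ 2 / 2) ^ 2 - (t * k) ^ 2 = m ^ 2 * (r * c + 1 / 2) ^ 2 := by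
      linear_combination (-(k ^ 2)) * hrt + (m ^ 2 / 4 - r ^ 2) * hck
    nlinarith [mul_pos (pow_pos hm 2) (pow_pos hcr 2)]
  have hx := hS.add_smul_add_smul_mem hp hq hpq hu hwu hr ht (by linarith)
    (α := 1 / 2 + r * c) (δ := r * k - t) (by linear_combination r ^ 2 * hck) (by linarith)
  have hxe := hsupp _ hx
  rw [add_sub_right_comm, add_sub_cancel_left, inner_add_left, real_inner_smul_left,
    real_inner_smul_left, hue, hwe] at hxe
  nlinarith

theorem mem_closedBall_sub_of_inner_sq_lt (hS : SpindleConvex S) {p q e : E3} (hp : p ∈ S)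
    (hq : q ∈ S) (he : ‖e‖ = 1) (hsupp : ∀ x ∈ S, ⟪x - p, e⟫_ℝ ≤ 0)
    (hpar : ⟪q - p, e⟫_ℝ ^ 2 < ‖q - p‖ ^ 2) :
    q ∈ closedBall (p - e) 1 := by
  rcases le_or_gt ‖q - p‖ 2 with hm | hm
  · simpa using hS.mem_closedBall_sub_smul_of_inner_sq_lt hp hq he hsupp hpar le_rfl (by linarith)
  · have h := hS.mem_closedBall_sub_smul_of_inner_sq_lt hp hq he hsupp hpar
      (r := ‖q - p‖ / 2) (by linarith) (by linarith)
    rw [mem_closedBall_sub_smul_iff he (by positivity)] at h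
    nlinarith

theorem subset_closedBall_sub (hS : SpindleConvex S) {p e : E3} (hp : p ∈ S) (he : ‖e‖ = 1)
    (hsupp : ∀ x ∈ S, ⟪x - p, e⟫_ℝ ≤ 0) : S ⊆ closedBall (p - e) 1 := by
  intro q hq
  by_cases hpar : ⟪q - p, e⟫_ℝ ^ 2 < ‖q - p‖ ^ 2
  · exact hS.mem_closedBall_sub_of_inner_sq_lt hp hq he hsupp hpar
  rw [← one_smul ℝ e, mem_closedBall_sub_smul_iff he zero_le_one]
  have hqe := hsupp q hq
  by_cases hm : ‖q - p‖ ≤ 2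
  · have h := sq_le_sq.1 (not_lt.1 hpar)
    rw [abs_norm, abs_of_nonpos hqe] at h
    nlinarith [norm_nonneg (q - p)]
  -- `q - p` is a multiple of `e`: use the top of the half circle over `[p, q]` instead
  obtain ⟨f, hf, hwf, hef⟩ := exists_norm_eq_one_inner_eq_zero (by simp) (q - p) e
  have hpq : p ≠ q := by rintro rfl; simp at hm
  have hx := hS.add_smul_add_smul_mem hp hq hpq hf hwf (r := ‖q - p‖ / 2) (t := 0)
    (α := 1 / 2) (δ := ‖q - p‖ / 2) (by linarith) le_rfl (by ring) (by ring) (by linarith)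
  have hxp : p + (1 / 2 : ℝ) • (q - p) + (‖q - p‖ / 2) • f - p =
      (1 / 2 : ℝ) • (q - p) + (‖q - p‖ / 2) • f := by abel
  have hxe : ⟪(1 / 2 : ℝ) • (q - p) + (‖q - p‖ / 2) • f, e⟫_ℝ = ⟪q - p, e⟫_ℝ / 2 := by
    rw [inner_add_left, real_inner_smul_left, real_inner_smul_left, real_inner_comm e f, hef]; ring
  have hxn : ‖(1 / 2 : ℝ) • (q - p) + (‖q - p‖ / 2) • f‖ ^ 2 = ‖q - p‖ ^ 2 / 2 := by
    rw [norm_smul_add_smul_sq hwf, hf]; ring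
  have hCS : ⟪q - p, e⟫_ℝ ^ 2 ≤ ‖q - p‖ ^ 2 := by
    simpa [he] using sq_le_sq' (neg_le_of_abs_le (abs_real_inner_le_norm _ _))
      (le_of_abs_le (abs_real_inner_le_norm (q - p) e))
  have h := hS.mem_closedBall_sub_of_inner_sq_lt hp hx he hsupp
    (by rw [hxp, hxe, hxn]; nlinarith)
  rw [← one_smul ℝ e, mem_closedBall_sub_smul_iff he zero_le_one, hxp, hxe, hxn] at h
  linarith

end SpindleConvex

theorem spindleConvex_separation_general (S : Set E3) (hcl : IsClosed S) (hsc : SpindleConvex S)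
    (z : E3) (hz : z ∉ S) :
    ∃ c : E3, S ⊆ Metric.closedBall c 1 ∧ z ∉ Metric.closedBall c 1 := by
  rcases S.eq_empty_or_nonempty with rfl | hne
  · obtain ⟨v, hv⟩ := exists_norm_eq E3 zero_le_two
    exact ⟨z + v, Set.empty_subset _, by simp [hv]⟩
  have hconv := hsc.convex hcl
  obtain ⟨p, hp, hmin⟩ := exists_norm_eq_iInf_of_complete_convex hne hcl.isComplete hconv z
  have hsupp := (norm_eq_iInf_iff_real_inner_le_zero hconv hp).1 hmin
  have hzp : z - p ≠ 0 := sub_ne_zero.2 (ne_of_mem_of_not_mem hp hz).symm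
  set e := ‖z - p‖⁻¹ • (z - p)
  have he : ‖e‖ = 1 := norm_smul_inv_norm hzp
  have hze : ⟪z - p, e⟫_ℝ = ‖z - p‖ := by
    rw [real_inner_smul_right, real_inner_self_eq_norm_sq]; field_simp
  refine ⟨p - e, hsc.subset_closedBall_sub hp he fun x hx => ?_, ?_⟩
  · rw [real_inner_smul_right, real_inner_comm]
    exact mul_nonpos_of_nonneg_of_nonpos (by positivity) (hsupp x hx)
  · rw [← one_smul ℝ e, mem_closedBall_sub_smul_iff he zero_le_one, hze]
    nlinarith [norm_pos_iff.2 hzp]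

/-- Separation by a unit sphere: a closed spindle-convex proper subset of ℝ³ can be
separated from any outside point by a closed unit ball containing it. -/
theorem spindleConvex_separation (S : Set E3) (hcl : IsClosed S) (hsc : SpindleConvex S)
    (hproper : S ≠ Set.univ) (z : E3) (hz : z ∉ S) :
    ∃ c : E3, S ⊆ Metric.closedBall c 1 ∧ z ∉ Metric.closedBall c 1 :=
  spindleConvex_separation_general S hcl hsc z hz
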